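/- Let K : ℝ → ℝ be even, integrable with ∫_ℝ K = 1, bounded on [−1,1], and with sup_x x²|K(x)| < ∞. Let f : ℝ → ℝ be uniformly continuous and bounded with modulus of continuity ω(f;·). Then there is a constant C (depending only on K) such that for all λ > 1, sup_x |λ∫_ℝ f(t)K(λ(t−x))dt − f(x)| ≤ C·(1/λ)∫₁^λ ω(f;1/u) du + C·ω(f;1/λ). -/

import Mathlib

/-!
Substituting `u = l (t - x)` and using `∫ K = 1`, the error is `∫ (f (x + u / l) - f x) K u du`,
which is at most `∫ ω(|u| / l) |K u| du`. On `|u| < 1` this is at most `ω(1/l) ‖K‖₁`. On `|u| ≥ 1`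
the decay `|K u| ≤ M₀ / u²` and the substitution `w = l / |u|` bound it by
`(2 M₀ / l) ∫_{(0, l]} ω(1/w) dw`. The part over `(1, l]` is the first term of the estimate. On
`(0, 1]` we use `ω ≤ B ω(1)` (`f` is bounded, and `ω(1) = 0` forces `ω = 0`) together with
`ω(1) ≤ ⌈l⌉ ω(1/l) ≤ 2 l ω(1/l)`, from subadditivity of `ω`; this gives the second term.
-/

open MeasureTheory Real

/-- The sup-norm modulus of continuity of `f`. -/
noncomputable def modulus (f : ℝ → ℝ) (t : ℝ) : ℝ :=
  sSup {y : ℝ | ∃ s x : ℝ, 0 ≤ s ∧ s ≤ t ∧ y = |f (x + s) - f x|}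

open Set

section Modulus

variable {f : ℝ → ℝ} {M : ℝ}

theorem modulus_nonneg (f : ℝ → ℝ) (t : ℝ) : 0 ≤ modulus f t :=
  Real.sSup_nonneg fun _ ⟨_, _, _, _, hy⟩ => hy ▸ abs_nonneg _

theorem modulus_le_of_forall {t c : ℝ} (hc : 0 ≤ c)
    (h : ∀ s x, 0 ≤ s → s ≤ t → |f (x + s) - f x| ≤ c) : modulus f t ≤ c :=
  Real.sSup_le (by rintro _ ⟨s, x, hs, hst, rfl⟩; exact h s x hs hst) hc

theorem le_modulus (hM : ∀ x, |f x| ≤ M) {s t : ℝ} (x : ℝ) (hs : 0 ≤ s) (hst : s ≤ t) :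
    |f (x + s) - f x| ≤ modulus f t := by
  refine le_csSup ⟨2 * M, ?_⟩ ⟨s, x, hs, hst, rfl⟩
  rintro _ ⟨s, x, -, -, rfl⟩
  linarith [abs_sub (f (x + s)) (f x), hM (x + s), hM x]

theorem abs_sub_le_modulus (hM : ∀ x, |f x| ≤ M) (x y : ℝ) :
    |f y - f x| ≤ modulus f |y - x| := by
  rcases le_total x y with hxy | hyx
  · simpa using le_modulus hM x (sub_nonneg.2 hxy) (le_abs_self (y - x))
  · rw [abs_sub_comm, abs_sub_comm y]
    simpa using le_modulus hM y (sub_nonneg.2 hyx) (le_abs_self (x - y))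

theorem modulus_le_two_mul (hM : ∀ x, |f x| ≤ M) (t : ℝ) : modulus f t ≤ 2 * M :=
  modulus_le_of_forall (by linarith [abs_nonneg (f 0), hM 0]) fun s x _ _ =>
    by linarith [abs_sub (f (x + s)) (f x), hM (x + s), hM x]

theorem norm_modulus_le (hM : ∀ x, |f x| ≤ M) (t : ℝ) : ‖modulus f t‖ ≤ 2 * M := by
  rw [norm_of_nonneg (modulus_nonneg f t)]
  exact modulus_le_two_mul hM t

theorem modulus_mono (hM : ∀ x, |f x| ≤ M) : Monotone (modulus f) := fun _ _ hab =>
  modulus_le_of_forall (modulus_nonneg f _) fun _ x hs hst => le_modulus hM x hs (hst.trans hab)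

theorem modulus_zero (f : ℝ → ℝ) : modulus f 0 = 0 :=
  le_antisymm (modulus_le_of_forall le_rfl fun s x hs hs0 => by
    simp [le_antisymm hs0 hs]) (modulus_nonneg f 0)

theorem modulus_add_le (hM : ∀ x, |f x| ≤ M) {a : ℝ} (ha : 0 ≤ a) (b : ℝ) :
    modulus f (a + b) ≤ modulus f a + modulus f b := by
  refine modulus_le_of_forall (add_nonneg (modulus_nonneg f a) (modulus_nonneg f b))
    fun s x hs hsab => ?_
  rcases le_total s a with hsa | has
  · linarith [le_modulus hM x hs hsa, modulus_nonneg f b]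
  · have h₁ := le_modulus hM (x + a) (sub_nonneg.2 has) (by linarith : s - a ≤ b)
    rw [add_add_sub_cancel] at h₁
    linarith [abs_sub_le (f (x + s)) (f (x + a)) (f x), le_modulus hM x ha le_rfl]

theorem modulus_natCast_mul_le (hM : ∀ x, |f x| ≤ M) (n : ℕ) {h : ℝ} (hh : 0 ≤ h) :
    modulus f (n * h) ≤ n * modulus f h := by
  induction n with
  | zero => simp [modulus_zero f]
  | succ n ih =>
    push_cast
    rw [add_mul, one_mul, add_mul, one_mul]
    linarith [modulus_add_le hM (by positivity : 0 ≤ (n : ℝ) * h) h]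

theorem modulus_one_le (hM : ∀ x, |f x| ≤ M) {l : ℝ} (hl : 1 ≤ l) :
    modulus f 1 ≤ 2 * l * modulus f (1 / l) := by
  have hl₀ : 0 < l := one_pos.trans_le hl
  have hceil : (⌈l⌉₊ : ℝ) ≤ 2 * l := by linarith [Nat.ceil_lt_add_one hl₀.le]
  calc modulus f 1 ≤ modulus f (⌈l⌉₊ * (1 / l)) :=
        modulus_mono hM (by rw [mul_one_div, le_div_iff₀ hl₀, one_mul]; exact Nat.le_ceil l)
    _ ≤ ⌈l⌉₊ * modulus f (1 / l) := modulus_natCast_mul_le hM _ (by positivity)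
    _ ≤ 2 * l * modulus f (1 / l) := by gcongr; exact modulus_nonneg f _

theorem exists_modulus_le_mul_modulus_one (hM : ∀ x, |f x| ≤ M) :
    ∃ B, 0 ≤ B ∧ ∀ t, modulus f t ≤ B * modulus f 1 := by
  rcases (modulus_nonneg f 1).eq_or_lt with h₁ | h₁
  · refine ⟨0, le_rfl, fun t => ?_⟩
    calc modulus f t ≤ modulus f (⌈t⌉₊ * 1) := modulus_mono hM (by simpa using Nat.le_ceil t)
      _ ≤ ⌈t⌉₊ * modulus f 1 := modulus_natCast_mul_le hM _ zero_le_one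
      _ = 0 * modulus f 1 := by rw [← h₁]; simp
  · refine ⟨2 * M / modulus f 1, div_nonneg (by linarith [modulus_le_two_mul hM 1]) h₁.le,
      fun t => ?_⟩
    rw [div_mul_cancel₀ _ h₁.ne']
    exact modulus_le_two_mul hM t

theorem exists_modulus_le_mul_modulus_inv (hM : ∀ x, |f x| ≤ M) :
    ∃ B, 0 ≤ B ∧ ∀ l, 1 ≤ l → ∀ t, modulus f t ≤ B * l * modulus f (1 / l) := by
  obtain ⟨B, hB₀, hB⟩ := exists_modulus_le_mul_modulus_one hM
  refine ⟨2 * B, by positivity, fun l hl t => ?_⟩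
  calc modulus f t ≤ B * modulus f 1 := hB t
    _ ≤ B * (2 * l * modulus f (1 / l)) := by gcongr; exact modulus_one_le hM hl
    _ = 2 * B * l * modulus f (1 / l) := by ring

end Modulus

theorem integral_mul_comp_mul_sub (f K : ℝ → ℝ) {l : ℝ} (hl : 0 < l) (x : ℝ) :
    l * ∫ t, f t * K (l * (t - x)) = ∫ u, f (x + u / l) * K u := by
  have hG : ∀ t, f t * K (l * (t - x)) = f (x + l * (t - x) / l) * K (l * (t - x)) := by
    intro t; rw [mul_div_cancel_left₀ _ hl.ne', add_sub_cancel]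
  simp_rw [hG, integral_sub_right_eq_self (fun s => f (x + l * s / l) * K (l * s)) x,
    Measure.integral_comp_mul_left (fun u => f (x + u / l) * K u), smul_eq_mul,
    abs_of_pos (inv_pos.2 hl), mul_inv_cancel_left₀ hl.ne']

theorem integrable_indicator_Ici_one_div_sq_comp_abs {g : ℝ → ℝ} (hg : Measurable g) {c : ℝ}
    (hc : ∀ v, ‖g v‖ ≤ c) : Integrable fun u => (Ici 1).indicator (fun v => g v / v ^ 2) |u| := by
  have hc₀ : 0 ≤ c := (norm_nonneg _).trans (hc 0)
  refine (integrable_inv_one_add_sq.const_mul (2 * c)).mono'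
    (((hg.div (measurable_id.pow_const 2)).indicator measurableSet_Ici).comp
      measurable_abs).aestronglyMeasurable (ae_of_all _ fun u => ?_)
  by_cases hu : 1 ≤ |u|
  · have hu₂ : 1 ≤ u ^ 2 := by nlinarith [sq_abs u]
    rw [indicator_of_mem (show |u| ∈ Ici 1 from hu), norm_div, norm_pow,
      Real.norm_eq_abs |u|, abs_abs, div_le_iff₀ (by positivity)]
    calc ‖g |u|‖ ≤ c := hc _
      _ ≤ c * (2 * u ^ 2 / (1 + u ^ 2)) :=
        le_mul_of_one_le_right hc₀ (by rw [le_div_iff₀ (by positivity)]; linarith)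
      _ = 2 * c * (1 + u ^ 2)⁻¹ * |u| ^ 2 := by rw [sq_abs]; ring
  · rw [indicator_of_notMem (show |u| ∉ Ici 1 from hu), norm_zero]
    positivity

theorem setIntegral_Ici_one_comp_div_div_sq (g : ℝ → ℝ) {l : ℝ} (hl : 0 < l) :
    ∫ v in Ici 1, g (v / l) / v ^ 2 = l⁻¹ * ∫ w in Ioc 0 l, g (1 / w) := by
  have himage : (fun w => l * w⁻¹) '' Ioc 0 l = Ici 1 := by
    ext v
    constructor
    · rintro ⟨w, ⟨hw₀, hwl⟩, rfl⟩
      show 1 ≤ l * w⁻¹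
      rw [← div_eq_mul_inv, one_le_div hw₀]
      exact hwl
    · intro hv
      have hv₀ : 0 < v := one_pos.trans_le hv
      refine ⟨l / v, ⟨by positivity, div_le_self hl.le hv⟩, ?_⟩
      field_simp
  have hderiv : ∀ w ∈ Ioc 0 l,
      HasDerivWithinAt (fun w => l * w⁻¹) (l * -(w ^ 2)⁻¹) (Ioc 0 l) w := fun w hw =>
    ((hasDerivAt_inv hw.1.ne').const_mul l).hasDerivWithinAt
  have hinj : InjOn (fun w => l * w⁻¹) (Ioc 0 l) := fun a _ b _ h =>
    inv_injective (mul_left_cancel₀ hl.ne' h)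
  rw [← himage, integral_image_eq_integral_abs_deriv_smul measurableSet_Ioc hderiv hinj,
    ← integral_const_mul]
  refine setIntegral_congr_fun measurableSet_Ioc fun w hw => ?_
  have hw₀ : 0 < w := hw.1
  simp only [smul_eq_mul, abs_mul, abs_neg, abs_of_pos hl,
    abs_of_pos (inv_pos.2 (pow_pos hw₀ 2))]
  field_simp

section ModulusIntegrals

variable {f : ℝ → ℝ} {M : ℝ}

theorem integrable_modulus_comp_mul_abs {K φ : ℝ → ℝ} (hK : Integrable K)
    (hM : ∀ x, |f x| ≤ M) (hφ : Measurable φ) :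
    Integrable fun u => modulus f (φ u) * |K u| :=
  hK.abs.bdd_mul ((modulus_mono hM).measurable.comp hφ).aestronglyMeasurable
    (ae_of_all _ fun _ => norm_modulus_le hM _)

theorem integrableOn_Ioc_modulus_comp {φ : ℝ → ℝ} (hM : ∀ x, |f x| ≤ M) (hφ : Measurable φ)
    (a b : ℝ) : IntegrableOn (fun w => modulus f (φ w)) (Ioc a b) :=
  Measure.integrableOn_of_bounded (M := 2 * M) measure_Ioc_lt_top.ne
    ((modulus_mono hM).measurable.comp hφ).aestronglyMeasurable
    (ae_of_all _ fun _ => norm_modulus_le hM _)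

theorem abs_integral_mul_sub_le {K : ℝ → ℝ} (hK : Integrable K) (hK₁ : ∫ u, K u = 1)
    (hf : Continuous f) (hM : ∀ x, |f x| ≤ M) {l : ℝ} (hl : 0 < l) (x : ℝ) :
    |(∫ u, f (x + u / l) * K u) - f x| ≤ ∫ u, modulus f (|u| / l) * |K u| := by
  have hfK : Integrable fun u => f (x + u / l) * K u :=
    hK.bdd_mul (by fun_prop) (ae_of_all _ fun u => hM _)
  calc |(∫ u, f (x + u / l) * K u) - f x| = |∫ u, (f (x + u / l) - f x) * K u| := by
        simp_rw [sub_mul, integral_sub hfK (hK.const_mul _), integral_const_mul, hK₁, mul_one]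
    _ ≤ ∫ u, |(f (x + u / l) - f x) * K u| := abs_integral_le_integral_abs
    _ ≤ ∫ u, modulus f (|u| / l) * |K u| := by
        refine integral_mono_of_nonneg (ae_of_all _ fun u => abs_nonneg _)
          (integrable_modulus_comp_mul_abs hK hM (by fun_prop))
          (ae_of_all _ fun u => ?_)
        have h := abs_sub_le_modulus hM x (x + u / l)
        rw [add_sub_cancel_left, abs_div, abs_of_pos hl] at h
        simp only [abs_mul]
        exact mul_le_mul_of_nonneg_right h (abs_nonneg _)

theorem integral_modulus_mul_abs_le {K : ℝ → ℝ} {M₀ : ℝ} (hK : Integrable K)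
    (hKd : ∀ u, u ^ 2 * |K u| ≤ M₀) (hM : ∀ x, |f x| ≤ M) {l : ℝ} (hl : 0 < l) :
    ∫ u, modulus f (|u| / l) * |K u| ≤
      modulus f (1 / l) * (∫ u, |K u|) + 2 * M₀ * ∫ v in Ici 1, modulus f (v / l) / v ^ 2 := by
  set G := (Ici (1 : ℝ)).indicator fun v => modulus f (v / l) / v ^ 2
  have hG : Integrable fun u => G |u| :=
    integrable_indicator_Ici_one_div_sq_comp_abs
      ((modulus_mono hM).measurable.comp (measurable_id.div_const l))
      fun _ => norm_modulus_le hM _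
  have hpt : ∀ u, modulus f (|u| / l) * |K u| ≤ modulus f (1 / l) * |K u| + M₀ * G |u| := by
    intro u
    by_cases hu : 1 ≤ |u|
    · have hKu : |K u| ≤ M₀ / |u| ^ 2 := by
        rw [le_div_iff₀ (by positivity), sq_abs, mul_comm]; exact hKd u
      rw [show G |u| = _ from indicator_of_mem (show |u| ∈ Ici 1 from hu) _]
      calc modulus f (|u| / l) * |K u| ≤ modulus f (|u| / l) * (M₀ / |u| ^ 2) :=
            mul_le_mul_of_nonneg_left hKu (modulus_nonneg f _)
        _ = M₀ * (modulus f (|u| / l) / |u| ^ 2) := by ring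
        _ ≤ _ := le_add_of_nonneg_left (mul_nonneg (modulus_nonneg f _) (abs_nonneg _))
    · rw [show G |u| = 0 from indicator_of_notMem (show |u| ∉ Ici 1 from hu) _, mul_zero,
        add_zero]
      exact mul_le_mul_of_nonneg_right
        (modulus_mono hM (by gcongr; exact (not_le.1 hu).le)) (abs_nonneg _)
  calc ∫ u, modulus f (|u| / l) * |K u|
      ≤ ∫ u, (modulus f (1 / l) * |K u| + M₀ * G |u|) :=
        integral_mono (integrable_modulus_comp_mul_abs hK hM (by fun_prop))
          ((hK.abs.const_mul _).add (hG.const_mul _)) hpt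
    _ = modulus f (1 / l) * (∫ u, |K u|) + M₀ * ∫ u, G |u| := by
        rw [integral_add (hK.abs.const_mul _) (hG.const_mul _), integral_const_mul,
          integral_const_mul]
    _ = _ := by
        rw [integral_comp_abs, setIntegral_indicator measurableSet_Ici,
          inter_eq_right.2 (Ici_subset_Ioi.2 one_pos)]
        ring

theorem setIntegral_Ioc_zero_modulus_inv_le (hM : ∀ x, |f x| ≤ M) {l c : ℝ} (hl : 1 ≤ l)
    (hc : ∀ t, modulus f t ≤ c) :
    ∫ w in Ioc 0 l, modulus f (1 / w) ≤ (∫ w in Ioc 1 l, modulus f (1 / w)) + c := by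
  have hint := integrableOn_Ioc_modulus_comp (φ := fun w => 1 / w) hM (by fun_prop)
  rw [← Ioc_union_Ioc_eq_Ioc zero_le_one hl,
    setIntegral_union (Ioc_disjoint_Ioc_of_le le_rfl) measurableSet_Ioc (hint 0 1) (hint 1 l)]
  have hbound := norm_setIntegral_le_of_norm_le_const (μ := volume) (s := Ioc (0 : ℝ) 1)
    (f := fun w => modulus f (1 / w)) measure_Ioc_lt_top fun w _ => by
      rw [norm_of_nonneg (modulus_nonneg f _)]; exact hc _
  rw [Real.volume_real_Ioc_of_le zero_le_one, sub_zero, mul_one] at hbound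
  linarith [le_norm_self (∫ w in Ioc 0 1, modulus f (1 / w))]

end ModulusIntegrals

theorem fejer_type_uniform_estimate_general (K : ℝ → ℝ)
    (hKi : Integrable K) (hK1 : ∫ t : ℝ, K t = 1)
    (hKd : ∃ M : ℝ, ∀ x : ℝ, x ^ 2 * |K x| ≤ M)
    (f : ℝ → ℝ) (hf : UniformContinuous f) (hb : ∃ M : ℝ, ∀ x, |f x| ≤ M) :
    ∃ C : ℝ, ∀ l : ℝ, 1 < l → ∀ x : ℝ,
      |(l * ∫ t : ℝ, f t * K (l * (t - x))) - f x| ≤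
        C * ((1 / l) * ∫ u in Set.Ioc (1:ℝ) l, modulus f (1 / u)) +
          C * modulus f (1 / l) := by
  obtain ⟨M₀, hM₀⟩ := hKd
  obtain ⟨M, hM⟩ := hb
  obtain ⟨B, hB₀, hB⟩ := exists_modulus_le_mul_modulus_inv hM
  have hM₀_nonneg : 0 ≤ M₀ := by simpa using hM₀ 0
  have hIK : 0 ≤ ∫ u, |K u| := integral_nonneg fun u => abs_nonneg _
  refine ⟨2 * M₀ + (∫ u, |K u|) + 2 * M₀ * B, fun l hl x => ?_⟩
  have hl₀ : 0 < l := one_pos.trans hl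
  set J := ∫ u in Ioc 1 l, modulus f (1 / u)
  set ω := modulus f (1 / l)
  have hJ : 0 ≤ J := setIntegral_nonneg measurableSet_Ioc fun u _ => modulus_nonneg f _
  have hω : 0 ≤ ω := modulus_nonneg f (1 / l)
  rw [integral_mul_comp_mul_sub f K hl₀ x]
  calc _ ≤ ∫ u, modulus f (|u| / l) * |K u| :=
        abs_integral_mul_sub_le hKi hK1 hf.continuous hM hl₀ x
    _ ≤ ω * (∫ u, |K u|) + 2 * M₀ * (l⁻¹ * ∫ w in Ioc 0 l, modulus f (1 / w)) := by
        rw [← setIntegral_Ici_one_comp_div_div_sq _ hl₀]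
        exact integral_modulus_mul_abs_le hKi hM₀ hM hl₀
    _ ≤ ω * (∫ u, |K u|) + 2 * M₀ * (l⁻¹ * (J + B * l * ω)) := by
        gcongr
        exact setIntegral_Ioc_zero_modulus_inv_le hM hl.le (hB l hl.le)
    _ = 2 * M₀ * (1 / l * J) + ((∫ u, |K u|) + 2 * M₀ * B) * ω := by
        field_simp
        ring
    _ ≤ _ := by
        have ha : 0 ≤ 1 / l * J := mul_nonneg (one_div_nonneg.2 hl₀.le) hJ
        linarith [mul_nonneg hIK ha, mul_nonneg (mul_nonneg hM₀_nonneg hB₀) ha,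
          mul_nonneg hM₀_nonneg hω]

theorem fejer_type_uniform_estimate (K : ℝ → ℝ)
    (hKe : ∀ t : ℝ, K (-t) = K t) (hKi : Integrable K) (hK1 : ∫ t : ℝ, K t = 1)
    (hKb : ∃ M : ℝ, ∀ x ∈ Set.Icc (-1:ℝ) 1, |K x| ≤ M)
    (hKd : ∃ M : ℝ, ∀ x : ℝ, x ^ 2 * |K x| ≤ M)
    (f : ℝ → ℝ) (hf : UniformContinuous f) (hb : ∃ M : ℝ, ∀ x, |f x| ≤ M) :
    ∃ C : ℝ, ∀ l : ℝ, 1 < l → ∀ x : ℝ,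
      |(l * ∫ t : ℝ, f t * K (l * (t - x))) - f x| ≤
        C * ((1 / l) * ∫ u in Set.Ioc (1:ℝ) l, modulus f (1 / u)) +
          C * modulus f (1 / l) :=
  fejer_type_uniform_estimate_general K hKi hK1 hKd f hf hb
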